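/- arXiv:1404.4716 — 4 statements merged into one kernel-verified Lean document; each statement's English description precedes it below -/
import Mathlib

section
/- Let f: 𝔻 → ℂ be holomorphic and bounded, and suppose the radial boundary values of f vanish on a subarc of ∂𝔻 of positive length (i.e. lim_{r→1} f(re^{iθ}) = 0 for all θ in a nonempty open interval). Then f ≡ 0 on 𝔻. -/
/-!
Rotating `f` by finitely many angles `s ∈ S` whose rotated copies of the arc cover the circle, the
product `g z = ∏ s ∈ S, f (e^{is} z)` is bounded and holomorphic with radial limit `0` in every
direction. For `|w| < r < 1`, `g w` is the average of `z / (z - w) • g z` over `|z| = r`, which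
tends to `0` as `r → 1` by dominated convergence; so `g ≡ 0`, and as analytic functions on the
connected disc have no zero divisors, some rotation of `f`, hence `f` itself, vanishes.
-/

open Complex Metric Set Filter Asymptotics Real Topology MeasureTheory

theorem exists_finset_forall_exists_add_zsmul_mem_Ioo {p a b : ℝ} (hp : 0 < p) (hab : a < b) :
    ∃ S : Finset ℝ, ∀ θ, ∃ s ∈ S, ∃ m : ℤ, θ + s + m • p ∈ Ioo a b := by
  have hcover : Icc 0 p ⊆ ⋃ s : ℝ, Ioo (a - s) (b - s) := fun θ _ =>
    mem_iUnion.2 ⟨(a + b) / 2 - θ, by constructor <;> linarith⟩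
  obtain ⟨S, hS⟩ := isCompact_Icc.elim_finite_subcover _ (fun _ => isOpen_Ioo) hcover
  refine ⟨S, fun θ => ?_⟩
  obtain ⟨s, hs, hθs⟩ := mem_iUnion₂.1 (hS (Ico_subset_Icc_self (toIcoMod_mem_Ico' hp θ)))
  refine ⟨s, hs, -toIcoDiv hp 0 θ, ?_⟩
  rw [toIcoMod, mem_Ioo] at hθs
  rw [neg_zsmul, mem_Ioo]
  constructor <;> linarith [hθs.1, hθs.2]

theorem AnalyticOnNhd.exists_eqOn_zero_of_prod_eqOn_zero {𝕜 A ι : Type*}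
    [NontriviallyNormedField 𝕜] [NormedCommRing A] [IsDomain A] [NormedAlgebra 𝕜 A]
    {U : Set 𝕜} {S : Finset ι} {F : ι → 𝕜 → A} (hF : ∀ i ∈ S, AnalyticOnNhd 𝕜 (F i) U)
    (hU : IsPreconnected U) (hne : U.Nonempty) (hprod : EqOn (fun z => ∏ i ∈ S, F i z) 0 U) :
    ∃ i ∈ S, EqOn (F i) 0 U := by
  classical
  induction S using Finset.induction_on with
  | empty => exact absurd (hprod hne.some_mem) (by simp)
  | insert j S hj ih =>
    have hS : AnalyticOnNhd 𝕜 (fun z => ∏ i ∈ S, F i z) U :=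
      Finset.analyticOnNhd_fun_prod _ fun i hi => hF i (Finset.mem_insert_of_mem hi)
    rcases (hF j (Finset.mem_insert_self j S)).eq_zero_or_eq_zero_of_mul_eq_zero hS
      (fun z hz => by simpa [Finset.prod_insert hj] using hprod hz) hU with hj0 | hS0
    · exact ⟨j, Finset.mem_insert_self j S, hj0⟩
    · obtain ⟨i, hi, hi0⟩ := ih (fun i hi => hF i (Finset.mem_insert_of_mem hi)) hS0
      exact ⟨i, Finset.mem_insert_of_mem hi, hi0⟩

theorem tendsto_finset_prod_nhds_zero {ι α R : Type*} [SeminormedCommRing R] {l : Filter α}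
    {S : Finset ι} {u : ι → α → R} (hbdd : ∀ i ∈ S, IsBoundedUnder (· ≤ ·) l fun x => ‖u i x‖)
    (hzero : ∃ i ∈ S, Tendsto (u i) l (𝓝 0)) :
    Tendsto (fun x => ∏ i ∈ S, u i x) l (𝓝 0) := by
  rw [← isLittleO_one_iff ℝ]
  simpa using IsLittleO.finsetProd (g := fun _ _ => (1 : ℝ))
    (fun i hi => (hbdd i hi).isBigO_one ℝ)
    (hzero.imp fun _ ⟨hi, h⟩ => ⟨hi, (isLittleO_one_iff ℝ).2 h⟩)

theorem tendsto_circleAverage_nhds_zero {E : Type*} [NormedAddCommGroup E] [NormedSpace ℝ E]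
    {F : ℂ → E} {c : ℂ} {l : Filter ℝ} [l.IsCountablyGenerated] {C : ℝ}
    (hcont : ∀ᶠ r in l, Continuous fun θ => F (circleMap c r θ))
    (hbound : ∀ᶠ r in l, ∀ θ, ‖F (circleMap c r θ)‖ ≤ C)
    (hlim : ∀ θ, Tendsto (fun r => F (circleMap c r θ)) l (𝓝 0)) :
    Tendsto (circleAverage F c) l (𝓝 0) := by
  have h := intervalIntegral.tendsto_integral_filter_of_dominated_convergence (a := 0) (b := 2 * π)
    (μ := volume) (fun _ => C) (hcont.mono fun _ h => h.aestronglyMeasurable)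
    (hbound.mono fun _ h => ae_of_all _ fun θ _ => h θ) intervalIntegrable_const
    (ae_of_all _ fun θ _ => hlim θ)
  have h' := h.const_smul (2 * π)⁻¹
  rw [intervalIntegral.integral_zero, smul_zero] at h'
  exact h'

theorem norm_div_sub_le_inv_sub {z w : ℂ} {ρ : ℝ} (hw : ‖w‖ < ρ) (hρz : ρ ≤ ‖z‖) (hz : ‖z‖ ≤ 1) :
    ‖z / (z - w)‖ ≤ (ρ - ‖w‖)⁻¹ := by
  have hdist : ρ - ‖w‖ ≤ ‖z - w‖ := by linarith [norm_sub_norm_le z w]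
  rw [norm_div, div_eq_mul_inv]
  calc ‖z‖ * ‖z - w‖⁻¹ ≤ 1 * (ρ - ‖w‖)⁻¹ := by
        gcongr
    _ = (ρ - ‖w‖)⁻¹ := one_mul _

section CauchyKernel

variable {E : Type*} [NormedAddCommGroup E] [NormedSpace ℂ E] {g : ℂ → E} {w : ℂ} {r R : ℝ}

theorem DifferentiableOn.circleAverage_div_sub_smul [CompleteSpace E]
    (hg : DifferentiableOn ℂ g (ball 0 R)) (hw : ‖w‖ < r) (hr : r < R) :
    circleAverage (fun z => (z / (z - w)) • g z) 0 r = g w := by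
  have hr0 : |r| = r := abs_of_pos ((norm_nonneg w).trans_lt hw)
  have hsub : closedBall (0 : ℂ) |r| ⊆ ball 0 R := by
    rw [hr0]; exact closedBall_subset_ball hr
  have hw' : w ∈ ball (0 : ℂ) |r| := by
    rw [hr0, mem_ball_zero_iff]; exact hw
  simpa only [sub_zero] using (hg.diffContOnCl_ball hsub).circleAverage_smul_div hw'

theorem ContinuousOn.continuous_div_sub_smul_circleMap (hg : ContinuousOn g (ball 0 R))
    (hw : ‖w‖ < r) (hr : r < R) :
    Continuous fun θ => (circleMap 0 r θ / (circleMap 0 r θ - w)) • g (circleMap 0 r θ) := by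
  have hr0 : 0 ≤ r := (norm_nonneg w).trans hw.le
  have hne (θ : ℝ) : circleMap 0 r θ - w ≠ 0 := sub_ne_zero.2 fun h => by
    have := norm_circleMap_zero r θ
    rw [h, abs_of_nonneg hr0] at this
    exact hw.ne this
  have hcm := continuous_circleMap 0 r
  exact (hcm.div (hcm.sub continuous_const) hne).smul (hg.comp_continuous hcm
    fun θ => closedBall_subset_ball hr (circleMap_mem_closedBall 0 hr0 θ))

end CauchyKernel

theorem eqOn_zero_of_tendsto_circleMap_nhds_zero {E : Type*} [NormedAddCommGroup E]
    [NormedSpace ℂ E] [CompleteSpace E] {g : ℂ → E} (hg : DifferentiableOn ℂ g (ball 0 1))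
    (hb : ∃ M : ℝ, ∀ z ∈ ball (0 : ℂ) 1, ‖g z‖ ≤ M)
    (hlim : ∀ θ, Tendsto (fun r => g (circleMap 0 r θ)) (𝓝[<] 1) (𝓝 0)) :
    EqOn g 0 (ball 0 1) := by
  intro w hw
  show g w = 0
  obtain ⟨M, hM⟩ := hb
  rw [mem_ball_zero_iff] at hw
  obtain ⟨ρ, hwρ, hρ⟩ := exists_between hw
  have hρ0 : 0 < ρ := (norm_nonneg w).trans_lt hwρ
  have hnear : ∀ᶠ r in 𝓝[<] (1 : ℝ), r ∈ Ioo ρ 1 := Ioo_mem_nhdsLT hρ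
  have hmem : ∀ r ∈ Ioo ρ 1, ∀ θ, circleMap 0 r θ ∈ ball 0 1 := fun r hr θ =>
    closedBall_subset_ball hr.2 (circleMap_mem_closedBall 0 (hρ0.trans hr.1).le θ)
  set K : ℂ → E := fun z => (z / (z - w)) • g z
  have hK : ∀ r ∈ Ioo ρ 1, ∀ θ,
      ‖K (circleMap 0 r θ)‖ ≤ (ρ - ‖w‖)⁻¹ * ‖g (circleMap 0 r θ)‖ := fun r hr θ => by
    have hnorm : ‖circleMap 0 r θ‖ = r := by
      rw [norm_circleMap_zero, abs_of_pos (hρ0.trans hr.1)]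
    rw [norm_smul]
    gcongr
    exact norm_div_sub_le_inv_sub hwρ (by rw [hnorm]; exact hr.1.le)
      (by rw [hnorm]; exact hr.2.le)
  have hmean : ∀ᶠ r in 𝓝[<] (1 : ℝ), circleAverage K 0 r = g w := by
    filter_upwards [hnear] with r hr
    exact hg.circleAverage_div_sub_smul (hwρ.trans hr.1) hr.2
  have hcont : ∀ᶠ r in 𝓝[<] (1 : ℝ), Continuous fun θ => K (circleMap 0 r θ) := by
    filter_upwards [hnear] with r hr
    exact hg.continuousOn.continuous_div_sub_smul_circleMap (hwρ.trans hr.1) hr.2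
  have hbound : ∀ᶠ r in 𝓝[<] (1 : ℝ), ∀ θ, ‖K (circleMap 0 r θ)‖ ≤ (ρ - ‖w‖)⁻¹ * M := by
    filter_upwards [hnear] with r hr θ
    exact (hK r hr θ).trans (by gcongr; exact hM _ (hmem r hr θ))
  have hradial : ∀ θ, Tendsto (fun r => K (circleMap 0 r θ)) (𝓝[<] 1) (𝓝 0) := fun θ => by
    apply squeeze_zero_norm' (a := fun r => (ρ - ‖w‖)⁻¹ * ‖g (circleMap 0 r θ)‖)
    · filter_upwards [hnear] with r hr using hK r hr θ
    · simpa using (hlim θ).norm.const_mul (ρ - ‖w‖)⁻¹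
  exact tendsto_nhds_unique tendsto_const_nhds
    ((tendsto_circleAverage_nhds_zero hcont hbound hradial).congr' hmean)

theorem mapsTo_circleMap_zero_one_mul_ball (s R : ℝ) :
    MapsTo (circleMap 0 1 s * ·) (ball 0 R) (ball 0 R) := fun z hz => by
  rwa [mem_ball_zero_iff, norm_mul, norm_circleMap_zero, abs_one, one_mul, ← mem_ball_zero_iff]

/-- A bounded holomorphic function on the unit disc whose radial boundary
values vanish on an arc of positive length vanishes identically. -/
theorem stmt_4 (f : ℂ → ℂ) (hf : DifferentiableOn ℂ f (Metric.ball 0 1))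
    (hb : ∃ M : ℝ, ∀ z ∈ Metric.ball (0 : ℂ) 1, ‖f z‖ ≤ M)
    (a b : ℝ) (hab : a < b)
    (hlim : ∀ θ ∈ Set.Ioo a b,
      Filter.Tendsto (fun r : ℝ => f ((r : ℂ) * Complex.exp ((θ : ℂ) * Complex.I)))
        (nhdsWithin 1 (Set.Iio 1)) (nhds 0)) :
    Set.EqOn f 0 (Metric.ball 0 1) := by
  obtain ⟨M, hM⟩ := hb
  obtain ⟨S, hS⟩ := exists_finset_forall_exists_add_zsmul_mem_Ioo two_pi_pos hab
  have hrot := mapsTo_circleMap_zero_one_mul_ball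
  have hF (s : ℝ) : DifferentiableOn ℂ (fun z => f (circleMap 0 1 s * z)) (ball 0 1) :=
    hf.comp (by fun_prop) (hrot s 1)
  have hprod : EqOn (fun z => ∏ s ∈ S, f (circleMap 0 1 s * z)) 0 (ball 0 1) := by
    refine eqOn_zero_of_tendsto_circleMap_nhds_zero
      (DifferentiableOn.fun_finsetProd fun s _ => hF s) ⟨M ^ S.card, fun z hz => ?_⟩ fun θ => ?_
    · rw [norm_prod]
      exact (Finset.prod_le_prod (fun _ _ => norm_nonneg _) fun s _ => hM _ (hrot s 1 hz)).trans_eq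
        (Finset.prod_const M)
    obtain ⟨s₀, hs₀, m, hm⟩ := hS θ
    refine tendsto_finset_prod_nhds_zero (fun s _ => isBoundedUnder_of_eventually_le (a := M) ?_)
      ⟨s₀, hs₀, (hlim _ hm).congr fun r => ?_⟩
    · filter_upwards [Ioo_mem_nhdsLT zero_lt_one] with r hr
      exact hM _ (hrot s 1 (closedBall_subset_ball hr.2 (circleMap_mem_closedBall 0 hr.1.le θ)))
    · rw [circleMap_zero_mul, one_mul, add_comm s₀, ← (periodic_circleMap 0 r).zsmul m,
        circleMap_zero]
  obtain ⟨s, -, hs⟩ := AnalyticOnNhd.exists_eqOn_zero_of_prod_eqOn_zero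
    (fun s _ => (hF s).analyticOnNhd isOpen_ball) (convex_ball 0 1).isPreconnected
    ⟨0, mem_ball_self one_pos⟩ hprod
  intro z hz
  simpa [← mul_assoc, ← Complex.exp_add, circleMap_zero] using hs (hrot (-s) 1 hz)
end

section
/- Let D ⊆ ℂⁿ be a bounded domain all of whose boundary points are holomorphically extreme, and let X be a (positive-dimensional) complex submanifold of an open neighborhood N of closure(D) with X ∩ D ≠ ∅. Then X is not contained in closure(D); equivalently, for every p ∈ X ∩ ∂D and every r > 0, (X \ closure(D)) ∩ B(p,r) ≠ ∅. -/
/-- `X` is a `d`-dimensional (embedded, closed) complex submanifold of the open set `N ⊆ ℂⁿ`: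
`X ⊆ N`, `X` is closed in `N`, and near each of its points `X` is the image of an injective
holomorphic immersion of the unit ball of `ℂᵈ`. -/
def IsComplexSubmanifoldOf {n : ℕ} (d : ℕ) (N X : Set (Fin n → ℂ)) : Prop :=
  X ⊆ N ∧ (∀ q ∈ N, q ∈ closure X → q ∈ X) ∧
  ∀ p ∈ X, ∃ U : Set (Fin n → ℂ), IsOpen U ∧ p ∈ U ∧ U ⊆ N ∧
    ∃ φ : (Fin d → ℂ) → (Fin n → ℂ),
      DifferentiableOn ℂ φ (Metric.ball 0 1) ∧ φ 0 = p ∧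
      Set.InjOn φ (Metric.ball 0 1) ∧
      φ '' Metric.ball 0 1 = X ∩ U ∧
      ∀ x ∈ Metric.ball (0 : Fin d → ℂ) 1, Function.Injective (fderiv ℂ φ x)

/-- A holomorphic immersion chart is not constant along the direction `(1/2, …, 1/2)`
on any small disc around `0`. -/
lemma key_nonconst {n d : ℕ} (hd : 1 ≤ d) (φ : (Fin d → ℂ) → (Fin n → ℂ))
    (hφ : DifferentiableOn ℂ φ (Metric.ball 0 1))
    (hinj : Function.Injective (fderiv ℂ φ 0))
    {ε : ℝ} (hε : 0 < ε)
    (hconst : ∀ z ∈ Metric.ball (0:ℂ) ε, φ (z • (fun _ => (1/2 : ℂ))) = φ 0) : False := by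
  set e₀ : Fin d → ℂ := fun _ => (1/2 : ℂ) with he₀
  have he₀ne : e₀ ≠ 0 := by
    intro h
    have := congrFun h ⟨0, hd⟩
    simp [he₀] at this
  have h0 : (0 : Fin d → ℂ) ∈ Metric.ball (0 : Fin d → ℂ) 1 := Metric.mem_ball_self one_pos
  have hφat : DifferentiableAt ℂ φ 0 :=
    hφ.differentiableAt (Metric.isOpen_ball.mem_nhds h0)
  set L : ℂ →L[ℂ] (Fin d → ℂ) := (1 : ℂ →L[ℂ] ℂ).smulRight e₀ with hLdef
  have hgdef : (fun z : ℂ => φ (z • e₀)) = φ ∘ L := by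
    funext z; simp [hLdef]
  have hfd : fderiv ℂ (fun z : ℂ => φ (z • e₀)) 0 = (fderiv ℂ φ 0).comp L := by
    rw [hgdef]
    have hL0 : L 0 = 0 := by simp
    have := fderiv_comp (𝕜 := ℂ) 0 (hL0 ▸ hφat) L.differentiableAt
    rw [hL0] at this
    simpa [L.fderiv] using this
  have heq : (fun z : ℂ => φ (z • e₀)) =ᶠ[nhds 0] fun _ => φ 0 := by
    filter_upwards [Metric.ball_mem_nhds (0:ℂ) hε] with z hz
    exact hconst z hz
  have hzero : fderiv ℂ (fun z : ℂ => φ (z • e₀)) 0 = 0 := by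
    rw [heq.fderiv_eq]
    exact fderiv_const_apply _
  have : (fderiv ℂ φ 0) e₀ = (fderiv ℂ φ 0) 0 := by
    have h1 : ((fderiv ℂ φ 0).comp L) 1 = 0 := by rw [← hfd, hzero]; rfl
    simpa [hLdef] using h1
  exact he₀ne (hinj this)

/-- If all boundary points of the bounded domain `D` are holomorphically
extreme and `X` is a positive-dimensional complex submanifold of a neighbourhood `N` of
`closure D` with `X ∩ D ≠ ∅`, then `X ⊄ closure D`; moreover for every `p ∈ X ∩ ∂D` and
`r > 0` we have `(X \ closure D) ∩ B(p,r) ≠ ∅`. -/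
theorem stmt_5 {n d : ℕ} (hd : 1 ≤ d) (D N X : Set (Fin n → ℂ))
    (hDo : IsOpen D) (hDc : IsConnected D) (hDb : Bornology.IsBounded D)
    (hext : ∀ a ∈ frontier D, ∀ φ : ℂ → (Fin n → ℂ),
      DifferentiableOn ℂ φ (Metric.ball 0 1) →
      Set.MapsTo φ (Metric.ball 0 1) (closure D) → φ 0 = a →
      ∀ x ∈ Metric.ball (0 : ℂ) 1, φ x = a)
    (hNo : IsOpen N) (hND : closure D ⊆ N)
    (hX : IsComplexSubmanifoldOf d N X) (hXD : (X ∩ D).Nonempty) :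
    ¬ X ⊆ closure D ∧
      ∀ p ∈ X ∩ frontier D, ∀ r > 0, ((X \ closure D) ∩ Metric.ball p r).Nonempty := by
  obtain ⟨hXN, hXcl, hchart⟩ := hX
  set e₀ : Fin d → ℂ := fun _ => (1/2 : ℂ) with he₀
  have hmaps : ∀ z : ℂ, ‖z‖ < 1 → z • e₀ ∈ Metric.ball (0 : Fin d → ℂ) 1 := by
    intro z hz
    simp only [Metric.mem_ball, dist_zero_right]
    have h2 : ‖e₀‖ ≤ 1/2 := by
      apply pi_norm_le_iff_of_nonneg (by norm_num) |>.2
      intro i; simp [he₀]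
    calc ‖z • e₀‖ = ‖z‖ * ‖e₀‖ := norm_smul _ _
      _ ≤ ‖z‖ * (1/2) := by gcongr
      _ < 1 := by nlinarith [norm_nonneg z]
  have h0 : (0 : Fin d → ℂ) ∈ Metric.ball (0 : Fin d → ℂ) 1 := Metric.mem_ball_self one_pos
  -- Part 2
  have part2 : ∀ p ∈ X ∩ frontier D, ∀ r > 0,
      ((X \ closure D) ∩ Metric.ball p r).Nonempty := by
    rintro p ⟨hpX, hpF⟩ r hr
    by_contra hcon
    rw [Set.not_nonempty_iff_eq_empty] at hcon
    obtain ⟨U, hUo, hpU, hUN, φ, hφd, hφ0, hφinj, hφim, hφder⟩ := hchart p hpX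
    have hφat : DifferentiableAt ℂ φ 0 := hφd.differentiableAt (Metric.isOpen_ball.mem_nhds h0)
    have hcontg : ContinuousAt (fun z : ℂ => φ (z • e₀)) 0 := by
      apply ContinuousAt.comp
      · simpa using hφat.continuousAt
      · exact (continuous_id.smul continuous_const).continuousAt
    have hmem : (fun z : ℂ => φ (z • e₀)) ⁻¹' Metric.ball p r ∈ nhds (0:ℂ) := by
      apply hcontg.preimage_mem_nhds
      apply Metric.isOpen_ball.mem_nhds
      simp [hφ0, Metric.mem_ball_self hr]
    obtain ⟨ε, hε, hballε⟩ := Metric.mem_nhds_iff.1 hmem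
    set ε' := min ε 1 with hε'def
    have hε' : 0 < ε' := lt_min hε one_pos
    have hε'le1 : ε' ≤ 1 := min_le_right _ _
    have hε'leε : ε' ≤ ε := min_le_left _ _
    set ψ : ℂ → (Fin n → ℂ) := fun z => φ (((ε' : ℂ) * z) • e₀) with hψdef
    have hscale : ∀ z : ℂ, z ∈ Metric.ball (0:ℂ) 1 → ‖(ε':ℂ) * z‖ < ε' := by
      intro z hz
      simp only [Metric.mem_ball, dist_zero_right] at hz
      rw [norm_mul]
      simp only [Complex.norm_real, Real.norm_eq_abs, abs_of_pos hε']
      calc ε' * ‖z‖ < ε' * 1 := by gcongr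
        _ = ε' := mul_one _
    have hindiff : Differentiable ℂ (fun z : ℂ => ((ε' : ℂ) * z) • e₀) :=
      (differentiable_const _|>.mul differentiable_id).smul_const _
    have hψd : DifferentiableOn ℂ ψ (Metric.ball 0 1) := by
      apply DifferentiableOn.comp hφd hindiff.differentiableOn
      intro z hz
      simp only [Metric.mem_ball, dist_zero_right] at hz
      exact hmaps _ (lt_of_lt_of_le (hscale z (by simpa using hz)) hε'le1)
    have hψmem : ∀ z ∈ Metric.ball (0:ℂ) 1, ψ z ∈ X ∩ Metric.ball p r := by
      intro z hz
      constructor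
      · have : ((ε' : ℂ) * z) • e₀ ∈ Metric.ball (0 : Fin d → ℂ) 1 :=
          hmaps _ (lt_of_lt_of_le (hscale z hz) hε'le1)
        have : ψ z ∈ φ '' Metric.ball 0 1 := ⟨_, this, rfl⟩
        rw [hφim] at this
        exact this.1
      · apply hballε
        simp only [Metric.mem_ball, dist_zero_right]
        exact lt_of_lt_of_le (hscale z hz) hε'leε
    have hψmaps : Set.MapsTo ψ (Metric.ball 0 1) (closure D) := by
      intro z hz
      by_contra hnot
      have : ψ z ∈ (X \ closure D) ∩ Metric.ball p r :=
        ⟨⟨(hψmem z hz).1, hnot⟩, (hψmem z hz).2⟩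
      rw [hcon] at this
      exact this
    have hψ0 : ψ 0 = p := by simp [hψdef, hφ0]
    have hψeq := hext p hpF ψ hψd hψmaps hψ0
    apply key_nonconst hd φ hφd (hφder 0 h0) hε'
    intro z hz
    simp only [Metric.mem_ball, dist_zero_right] at hz
    have hw : z / (ε' : ℂ) ∈ Metric.ball (0:ℂ) 1 := by
      simp only [Metric.mem_ball, dist_zero_right, norm_div]
      rw [Complex.norm_real, Real.norm_eq_abs, abs_of_pos hε']
      rw [div_lt_one hε']
      exact hz
    have := hψeq _ hw
    have hne : (ε' : ℂ) ≠ 0 := by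
      simpa using hε'.ne'
    rw [hψdef] at this
    simp only at this
    rw [mul_div_cancel₀ _ hne] at this
    rw [show (fun _ : Fin d => (1/2:ℂ)) = e₀ from rfl]
    rw [this, hφ0]
  refine ⟨?_, part2⟩
  -- Part 1
  intro hsub
  rcases (X ∩ frontier D).eq_empty_or_nonempty with hfe | ⟨p, hp⟩
  · -- X ∩ frontier D = ∅, so X ⊆ D, X compact; maximum modulus gives a contradiction
    have hXD' : X ⊆ D := by
      intro x hx
      by_contra hxD
      have hxf : x ∈ frontier D := by
        rw [frontier, hDo.interior_eq]
        exact ⟨hsub hx, hxD⟩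
      have : x ∈ X ∩ frontier D := ⟨hx, hxf⟩
      rw [hfe] at this
      exact this
    have hXclosed : IsClosed X := by
      apply isClosed_of_closure_subset
      intro z hz
      have hz' : z ∈ closure D := by
        have := closure_mono hsub hz
        rwa [closure_closure] at this
      exact hXcl z (hND hz') hz
    have hXb : Bornology.IsBounded X := hDb.subset hXD'
    have hXcpt : IsCompact X := Metric.isCompact_iff_isClosed_bounded.2 ⟨hXclosed, hXb⟩
    have hXne : X.Nonempty := ⟨hXD.choose, hXD.choose_spec.1⟩
    set E := PiLp.continuousLinearEquiv 2 ℂ (fun _ : Fin n => ℂ) with hE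
    have hQcont : ContinuousOn (fun z : Fin n → ℂ => ‖E.symm z‖) X :=
      (E.symm.continuous.norm).continuousOn
    obtain ⟨a, haX, hamax⟩ := hXcpt.exists_isMaxOn hXne hQcont
    obtain ⟨U, hUo, haU, hUN, φ, hφd, hφ0, hφinj, hφim, hφder⟩ := hchart a haX
    set g : ℂ → PiLp 2 (fun _ : Fin n => ℂ) := fun z => E.symm (φ (z • e₀)) with hg
    have hgd : DifferentiableOn ℂ g (Metric.ball 0 1) := by
      apply (E.symm.differentiable.comp_differentiableOn)
      apply DifferentiableOn.comp hφd (differentiable_id.smul_const _).differentiableOn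
      intro z hz
      simp only [Metric.mem_ball, dist_zero_right] at hz
      exact hmaps z hz
    have hgX : ∀ z ∈ Metric.ball (0:ℂ) 1, φ (z • e₀) ∈ X := by
      intro z hz
      simp only [Metric.mem_ball, dist_zero_right] at hz
      have : φ (z • e₀) ∈ φ '' Metric.ball 0 1 := ⟨_, hmaps z hz, rfl⟩
      rw [hφim] at this
      exact this.1
    have hgmax : IsMaxOn (norm ∘ g) (Metric.ball 0 1) 0 := by
      intro z hz
      simp only [Function.comp_apply, hg, Set.mem_setOf_eq, zero_smul, hφ0]
      exact hamax (hgX z hz)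
    have heq := Complex.eqOn_of_isPreconnected_of_isMaxOn_norm
      (convex_ball (0:ℂ) 1).isPreconnected Metric.isOpen_ball hgd
      (Metric.mem_ball_self one_pos) hgmax
    apply key_nonconst hd φ hφd (hφder 0 h0) one_pos
    intro z hz
    have h1 := heq hz
    simp only [hg, Function.const_apply, zero_smul] at h1
    have := E.symm.injective h1
    rw [show (fun _ : Fin d => (1/2:ℂ)) = e₀ from rfl]
    exact this
  · obtain ⟨z, ⟨hzX, hzD⟩, _⟩ := part2 p hp 1 one_pos
    exact hzD (hsub hzX)
end

section
/- Let D ⊆ ℂⁿ be a bounded domain, z₀ ∈ D, and f: D → D holomorphic with f(z₀) = z₀. Then the family of linear maps {(f'(z₀))ᵏ : k ∈ ℕ} is bounded in operator norm; consequently f'(z₀) has spectral radius at most 1, and any eigenvalue λ with |λ| = 1 is semisimple (its geometric and algebraic multiplicities agree). -/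
/-!
Since `f` fixes `z₀`, the iterates `fᵏ` are holomorphic self-maps of `D` fixing `z₀` with
derivative `(f'(z₀))ᵏ`. As `D` contains a ball of radius `r` about `z₀` and lies in a closed ball
of radius `R` about `z₀`, the Schwarz lemma bounds every `‖(f'(z₀))ᵏ‖` by `R / r`.
Power-boundedness of `T = f'(z₀)` gives `|λ|ᵏ ≤ C` for every spectral value `λ` (as `λᵏ` lies in
the spectrum of `Tᵏ`), hence `|λ| ≤ 1`; and a Jordan block at a unimodular eigenvalue would make
`‖Tᵏ x‖` grow linearly in `k`.
-/

open Metric Set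

section PowerBounded

variable {𝕜 A : Type*} [NontriviallyNormedField 𝕜] [NormedRing A] [NormedAlgebra 𝕜 A]
  [CompleteSpace A]

theorem spectralRadius_le_one_of_norm_pow_le {a : A} {B : ℝ} (hB : ∀ k : ℕ, ‖a ^ k‖ ≤ B) :
    spectralRadius 𝕜 a ≤ 1 := by
  refine iSup₂_le fun μ hμ => ENNReal.coe_le_one_iff.mpr ?_
  rw [← NNReal.coe_le_one, coe_nnnorm]
  by_contra! hμ_gt
  obtain ⟨k, hk⟩ := pow_unbounded_of_one_lt (B * ‖(1 : A)‖) hμ_gt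
  have hle : ‖μ‖ ^ k ≤ B * ‖(1 : A)‖ :=
    calc ‖μ‖ ^ k = ‖μ ^ k‖ := (norm_pow μ k).symm
      _ ≤ ‖a ^ k‖ * ‖(1 : A)‖ := spectrum.norm_le_norm_mul_of_mem (spectrum.pow_mem_pow a k hμ)
      _ ≤ B * ‖(1 : A)‖ := by gcongr; exact hB k
  exact hk.not_ge hle

end PowerBounded

namespace Module.End

variable {R M : Type*} [CommRing R] [AddCommGroup M] [Module R M]

theorem ker_pow_le_ker_of_ker_sq_le {N : End R M} (h : LinearMap.ker (N ^ 2) ≤ LinearMap.ker N) :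
    ∀ k : ℕ, LinearMap.ker (N ^ k) ≤ LinearMap.ker N
  | 0 => fun x hx => by
    rw [pow_zero, LinearMap.mem_ker, Module.End.one_apply] at hx
    simp [hx]
  | k + 1 => fun x hx => by
    have hNx : N x ∈ LinearMap.ker (N ^ k) := by
      rwa [LinearMap.mem_ker, ← Module.End.mul_apply, ← pow_succ]
    refine h ?_
    rw [LinearMap.mem_ker, sq, Module.End.mul_apply]
    exact ker_pow_le_ker_of_ker_sq_le h k hNx

theorem maxGenEigenspace_eq_eigenspace_of_ker_sq_le {f : End R M} {μ : R}
    (h : LinearMap.ker ((f - μ • 1) ^ 2) ≤ LinearMap.ker (f - μ • 1)) :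
    f.maxGenEigenspace μ = f.eigenspace μ := by
  refine le_antisymm (fun x hx => ?_) ((f.genEigenspace μ).mono le_top)
  obtain ⟨k, hk⟩ := (f.mem_maxGenEigenspace μ x).mp hx
  rw [eigenspace_def]
  exact ker_pow_le_ker_of_ker_sq_le h k hk

theorem pow_apply_eq_add_nsmul {S : End R M} {x z : M} (hx : S x = x + z) (hz : S z = z) :
    ∀ k : ℕ, (S ^ k) x = x + k • z
  | 0 => by simp
  | k + 1 => by
    rw [pow_succ', Module.End.mul_apply, pow_apply_eq_add_nsmul hx hz k, map_add, map_nsmul, hx,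
      hz, succ_nsmul]
    abel

end Module.End

section Unipotent

variable {𝕜 E : Type*} [RCLike 𝕜] [NormedAddCommGroup E] [NormedSpace 𝕜 E]

theorem eq_zero_of_norm_pow_le_of_apply_eq_add {S : E →L[𝕜] E} {B : ℝ}
    (hB : ∀ k : ℕ, ‖S ^ k‖ ≤ B) {x z : E} (hx : S x = x + z) (hz : S z = z) : z = 0 := by
  have hpow : ∀ k : ℕ, (S ^ k) x = x + k • z := fun k =>
    (LinearMap.congr_fun (S.toLinearMap_pow k) x).trans (Module.End.pow_apply_eq_add_nsmul hx hz k)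
  have hbound : ∀ k : ℕ, k * ‖z‖ ≤ (B + 1) * ‖x‖ := fun k =>
    calc k * ‖z‖ = ‖k • z‖ := by rw [RCLike.norm_nsmul 𝕜, nsmul_eq_mul]
      _ = ‖(S ^ k) x - x‖ := by rw [hpow, add_sub_cancel_left]
      _ ≤ ‖(S ^ k) x‖ + ‖x‖ := norm_sub_le _ _
      _ ≤ B * ‖x‖ + ‖x‖ := by gcongr; exact (S ^ k).le_of_opNorm_le (hB k) x
      _ = (B + 1) * ‖x‖ := by ring
  by_contra hz0
  obtain ⟨k, hk⟩ := exists_nat_gt ((B + 1) * ‖x‖ / ‖z‖)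
  exact (hbound k).not_gt ((div_lt_iff₀ (norm_pos_iff.mpr hz0)).mp hk)

theorem ker_sq_sub_smul_le_of_norm_pow_le {T : E →L[𝕜] E} {B : ℝ} (hB : ∀ k : ℕ, ‖T ^ k‖ ≤ B)
    {μ : 𝕜} (hμ : ‖μ‖ = 1) :
    LinearMap.ker ((T.toLinearMap - μ • 1) ^ 2) ≤ LinearMap.ker (T.toLinearMap - μ • 1) := by
  intro x hx
  have hμ0 : μ ≠ 0 := norm_ne_zero_iff.mp (by rw [hμ]; exact one_ne_zero)
  set y := T x - μ • x with hy_def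
  have hy : T y = μ • y := by
    simpa [sq, hy_def, sub_eq_zero] using hx
  -- rescaling by `μ⁻¹` turns `T` on `span {x, y}` into a unipotent Jordan block
  have hS : ∀ k : ℕ, ‖(μ⁻¹ • T) ^ k‖ ≤ B := fun k => by
    rw [smul_pow, norm_smul, norm_pow, norm_inv, hμ, inv_one, one_pow, one_mul]
    exact hB k
  have hSx : (μ⁻¹ • T) x = x + μ⁻¹ • y := by
    simp only [smul_apply, hy_def, smul_sub, smul_smul, inv_mul_cancel₀ hμ0,
      one_smul, add_sub_cancel]
  have hSy : (μ⁻¹ • T) (μ⁻¹ • y) = μ⁻¹ • y := by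
    rw [smul_apply, map_smul, hy, smul_comm μ⁻¹ μ y, smul_smul, inv_mul_cancel₀ hμ0, one_smul]
  simpa [hμ0, hy_def] using eq_zero_of_norm_pow_le_of_apply_eq_add hS hSx hSy

end Unipotent

theorem exists_norm_fderiv_pow_le_of_mapsTo {E : Type*} [NormedAddCommGroup E] [NormedSpace ℂ E]
    {D : Set E} (hDo : IsOpen D) (hDb : Bornology.IsBounded D) {f : E → E}
    (hf : DifferentiableOn ℂ f D) (hfD : MapsTo f D D) {z₀ : E} (hz₀ : z₀ ∈ D) (hfix : f z₀ = z₀) :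
    ∃ B : ℝ, ∀ k : ℕ, ‖fderiv ℂ f z₀ ^ k‖ ≤ B := by
  obtain ⟨r, hr, hball⟩ := isOpen_iff.mp hDo z₀ hz₀
  obtain ⟨R, hR⟩ := hDb.subset_closedBall z₀
  refine ⟨R / r, fun k => ?_⟩
  have hderiv : fderiv ℂ f^[k] z₀ = fderiv ℂ f z₀ ^ k :=
    ((hf.differentiableAt (hDo.mem_nhds hz₀)).hasFDerivAt.iterate hfix k).fderiv
  have hmaps : MapsTo f^[k] (ball z₀ r) (closedBall (f^[k] z₀) R) := by
    rw [Function.iterate_fixed hfix k]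
    exact (hfD.iterate k).mono hball hR
  rw [← hderiv]
  exact Complex.norm_fderiv_le_div_of_mapsTo_ball ((hf.iterate hfD k).mono hball) hmaps hr

theorem stmt_11_general {n : ℕ} (D : Set (Fin n → ℂ)) (hDo : IsOpen D)
    (hDb : Bornology.IsBounded D)
    (f : (Fin n → ℂ) → (Fin n → ℂ)) (hf : DifferentiableOn ℂ f D)
    (hfD : Set.MapsTo f D D) (z₀ : Fin n → ℂ) (hz₀ : z₀ ∈ D) (hfix : f z₀ = z₀) :
    (∃ B : ℝ, ∀ k : ℕ, ‖(fderiv ℂ f z₀) ^ k‖ ≤ B) ∧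
    spectralRadius ℂ (fderiv ℂ f z₀) ≤ 1 ∧
    ∀ μ : ℂ, ‖μ‖ = 1 →
      Module.End.eigenspace (fderiv ℂ f z₀).toLinearMap μ =
        Module.End.maxGenEigenspace (fderiv ℂ f z₀).toLinearMap μ := by
  obtain ⟨B, hB⟩ := exists_norm_fderiv_pow_le_of_mapsTo hDo hDb hf hfD hz₀ hfix
  refine ⟨⟨B, hB⟩, spectralRadius_le_one_of_norm_pow_le hB, fun μ hμ => ?_⟩
  exact (Module.End.maxGenEigenspace_eq_eigenspace_of_ker_sq_le
    (ker_sq_sub_smul_le_of_norm_pow_le hB hμ)).symm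

/-- If `f : D → D` is holomorphic on a bounded domain with `f(z₀) = z₀`,
then the powers of `f'(z₀)` are uniformly bounded in operator norm; consequently the
spectral radius of `f'(z₀)` is at most `1` and every unimodular eigenvalue is semisimple
(its eigenspace equals its generalized eigenspace). -/
theorem stmt_11 {n : ℕ} (D : Set (Fin n → ℂ)) (hDo : IsOpen D) (hDc : IsConnected D)
    (hDb : Bornology.IsBounded D)
    (f : (Fin n → ℂ) → (Fin n → ℂ)) (hf : DifferentiableOn ℂ f D)
    (hfD : Set.MapsTo f D D) (z₀ : Fin n → ℂ) (hz₀ : z₀ ∈ D) (hfix : f z₀ = z₀) :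
    (∃ B : ℝ, ∀ k : ℕ, ‖(fderiv ℂ f z₀) ^ k‖ ≤ B) ∧
    spectralRadius ℂ (fderiv ℂ f z₀) ≤ 1 ∧
    ∀ μ : ℂ, ‖μ‖ = 1 →
      Module.End.eigenspace (fderiv ℂ f z₀).toLinearMap μ =
        Module.End.maxGenEigenspace (fderiv ℂ f z₀).toLinearMap μ :=
  stmt_11_general D hDo hDb f hf hfD z₀ hz₀ hfix
end

section
/- Let D ⊆ ℂⁿ be a bounded balanced pseudoconvex domain all of whose boundary points are holomorphically extreme, and let ρ: D → D be a holomorphic retraction with ρ(0) = 0. Then ρ(D) = D ∩ V, where V = {v ∈ ℂⁿ : ρ'(0)v = v}; in particular, the image of ρ is the intersection of D with a complex-linear subspace. -/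
/-!
Write `h` for the Minkowski functional (`gauge`) of `D`. For `v ∈ D \ {0}` let `m = h v` and
`c = v / m`, a boundary point. The disc `F λ = ρ (λ c)` maps into `D` with `F 0 = 0`, so
`G = F / λ` (`dslope F 0`) satisfies the Schwarz bound `h ∘ G ≤ 1`, i.e. `G` is a holomorphic disc
in `closure D`. By holomorphic extremality and the identity theorem, a holomorphic disc in
`closure D` that touches `frontier D` is constant. Since `G 0 = ρ'(0) c` and `G m = ρ v / m`,
both `ρ v = v` and `ρ'(0) v = v` say that `G` takes the boundary value `c`, i.e. that `G ≡ c`.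
The Schwarz bound itself comes from the same rigidity: on a closed disc of radius `r < 1` the
maximum of `h ∘ G` is attained on the circle, where it is `h (F λ) / r < 1 / r`.
-/

/-- `u` is plurisubharmonic on `D`: upper semi-continuous on `D` and satisfying the
sub-mean-value inequality on every complex line. -/
def PlurisubharmonicOn {n : ℕ} (u : (Fin n → ℂ) → ℝ) (D : Set (Fin n → ℂ)) : Prop :=
  UpperSemicontinuousOn u D ∧
  ∀ z ∈ D, ∀ w : Fin n → ℂ, ∀ r : ℝ, 0 < r →
    (∀ l : ℂ, ‖l‖ ≤ r → z + l • w ∈ D) →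
    u z ≤ (2 * Real.pi)⁻¹ *
      ∫ θ in (0:ℝ)..(2 * Real.pi), u (z + ((r : ℂ) * Complex.exp ((θ : ℂ) * Complex.I)) • w)

/-- `D` is pseudoconvex: `-log dist(·, ∂D)` is plurisubharmonic on `D`. -/
def Pseudoconvex {n : ℕ} (D : Set (Fin n → ℂ)) : Prop :=
  PlurisubharmonicOn (fun z => -Real.log (Metric.infDist z Dᶜ)) D

open Metric Set Filter Topology

theorem upperSemicontinuous_gauge_of_isOpen {E : Type*} [AddCommGroup E] [Module ℝ E]
    [TopologicalSpace E] [ContinuousSMul ℝ E] {D : Set E} (hDo : IsOpen D) (h0 : (0 : E) ∈ D) :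
    UpperSemicontinuous (gauge D) := by
  rw [upperSemicontinuous_iff_isOpen_preimage]
  intro t
  change IsOpen {x | gauge D x < t}
  rw [setOfPred_gauge_lt_eq (absorbent_nhds_zero (hDo.mem_nhds h0)) t]
  exact isOpen_biUnion fun r hr => hDo.smul₀ hr.1.ne'

section Gauge

variable {E : Type*} [NormedAddCommGroup E] [NormedSpace ℂ E] {D : Set E} {x : E}

theorem Balanced.gauge_lt_one_iff (hbal : Balanced ℂ D) (hDo : IsOpen D) (h0 : (0 : E) ∈ D) :
    gauge D x < 1 ↔ x ∈ D := by
  refine ⟨fun hx => ?_, gauge_lt_one_of_mem_of_isOpen hDo⟩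
  obtain ⟨r, hr0, hr1, y, hy, rfl⟩ :=
    exists_lt_of_gauge_lt (absorbent_nhds_zero (hDo.mem_nhds h0)) hx
  change r • y ∈ D
  rw [RCLike.real_smul_eq_coe_smul (K := ℂ)]
  exact balanced_iff_smul_mem.1 hbal (by simpa [abs_of_pos hr0] using hr1.le) hy

theorem Balanced.mem_closure_of_gauge_le_one (hbal : Balanced ℂ D) (hDo : IsOpen D)
    (h0 : (0 : E) ∈ D) (hx : gauge D x ≤ 1) : x ∈ closure D := by
  have hnear : ∀ᶠ r : ℝ in 𝓝[<] 1, r • x ∈ D := by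
    filter_upwards [Ico_mem_nhdsLT one_pos] with r ⟨hr₀, hr₁⟩
    rw [← hbal.gauge_lt_one_iff hDo h0, gauge_smul_of_nonneg hr₀, smul_eq_mul]
    exact mul_lt_one_of_nonneg_of_lt_one_left hr₀ hr₁ hx
  have hlim : Tendsto (fun r : ℝ => r • x) (𝓝 1) (𝓝 ((1 : ℝ) • x)) := tendsto_id.smul_const x
  rw [one_smul] at hlim
  exact mem_closure_of_tendsto (hlim.mono_left nhdsWithin_le_nhds) hnear

theorem Balanced.mem_frontier_of_gauge_eq_one (hbal : Balanced ℂ D) (hDo : IsOpen D)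
    (h0 : (0 : E) ∈ D) (hx : gauge D x = 1) : x ∈ frontier D := by
  rw [hDo.frontier_eq]
  exact ⟨hbal.mem_closure_of_gauge_le_one hDo h0 hx.le,
    fun h => (gauge_lt_one_of_mem_of_isOpen hDo h).ne hx⟩

end Gauge

theorem dslope_comp_smul_zero {E F : Type*} [NormedAddCommGroup E] [NormedSpace ℂ E]
    [NormedAddCommGroup F] [NormedSpace ℂ F] {ρ : E → F} (hρ : DifferentiableAt ℂ ρ 0) (c : E) :
    dslope (fun z : ℂ => ρ (z • c)) 0 0 = fderiv ℂ ρ 0 c := by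
  have hρ' : HasFDerivAt ρ (fderiv ℂ ρ 0) ((0 : ℂ) • c) := by
    rw [zero_smul]
    exact hρ.hasFDerivAt
  have hderiv := hρ'.comp_hasDerivAt (0 : ℂ) ((hasDerivAt_id (0 : ℂ)).smul_const c)
  rw [one_smul] at hderiv
  rw [dslope_same]
  exact hderiv.deriv

section HolomorphicDiscs

variable {E : Type*} [NormedAddCommGroup E] [NormedSpace ℂ E] {D : Set E}

def IsHolomorphicallyExtreme (D : Set E) (a : E) : Prop :=
  ∀ φ : ℂ → E, DifferentiableOn ℂ φ (ball 0 1) → MapsTo φ (ball 0 1) (closure D) →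
    φ 0 = a → ∀ x ∈ ball (0 : ℂ) 1, φ x = a

variable [CompleteSpace E]

-- Extremality makes `H` constant on a small disc around `z₀`, then the identity theorem applies.
theorem eqOn_of_mem_frontier (hext : ∀ a ∈ frontier D, IsHolomorphicallyExtreme D a)
    {U : Set ℂ} (hU : IsOpen U) (hUc : IsPreconnected U) {H : ℂ → E}
    (hH : DifferentiableOn ℂ H U) {z₀ : ℂ} (hz₀ : z₀ ∈ U)
    (hcl : ∀ᶠ z in 𝓝 z₀, H z ∈ closure D) (hfr : H z₀ ∈ frontier D) :
    EqOn H (fun _ => H z₀) U := by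
  obtain ⟨ε, hε, hball⟩ := Metric.mem_nhds_iff.1 (Filter.inter_mem (hU.mem_nhds hz₀) hcl)
  have hmaps : MapsTo (fun x : ℂ => z₀ + (ε : ℂ) * x) (ball 0 1) (ball z₀ ε) := by
    intro x hx
    rw [mem_ball_zero_iff] at hx
    simpa [dist_eq_norm, norm_mul, abs_of_pos hε] using mul_lt_of_lt_one_right hε hx
  have hconst := hext _ hfr (fun x => H (z₀ + (ε : ℂ) * x))
    ((hH.mono fun z hz => (hball hz).1).comp (by fun_prop) hmaps)
    (fun x hx => (hball (hmaps hx)).2) (by simp)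
  have hnear : H =ᶠ[𝓝 z₀] fun _ => H z₀ := by
    filter_upwards [ball_mem_nhds z₀ hε] with z hz
    have hx : (z - z₀) / ε ∈ ball (0 : ℂ) 1 := by
      rw [mem_ball_zero_iff, norm_div, Complex.norm_real, Real.norm_of_nonneg hε.le,
        div_lt_one hε, ← dist_eq_norm]
      exact hz
    simpa [mul_div_cancel₀ _ (Complex.ofReal_ne_zero.2 hε.ne')] using hconst _ hx
  exact (hH.analyticOnNhd hU).eqOn_of_preconnected_of_eventuallyEq analyticOnNhd_const hUc hz₀
    hnear

theorem exists_mem_sphere_forall_gauge_le (hbal : Balanced ℂ D) (hDo : IsOpen D)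
    (h0 : (0 : E) ∈ D) (hext : ∀ a ∈ frontier D, IsHolomorphicallyExtreme D a)
    {G : ℂ → E} (hG : DifferentiableOn ℂ G (ball 0 1)) {r : ℝ} (hr0 : 0 < r) (hr1 : r < 1) :
    ∃ w ∈ sphere (0 : ℂ) r, ∀ z ∈ closedBall (0 : ℂ) r, gauge D (G z) ≤ gauge D (G w) := by
  have hK : closedBall (0 : ℂ) r ⊆ ball 0 1 := closedBall_subset_ball hr1
  obtain ⟨z₁, hz₁, hmax⟩ := UpperSemicontinuousOn.exists_isMaxOn (nonempty_closedBall.2 hr0.le)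
    (isCompact_closedBall 0 r) (((upperSemicontinuous_gauge_of_isOpen hDo h0).upperSemicontinuousOn
      univ).comp (hG.continuousOn.mono hK) (mapsTo_univ _ _))
  by_cases hz₁s : z₁ ∈ sphere (0 : ℂ) r
  · exact ⟨z₁, hz₁s, hmax⟩
  have hz₁b : z₁ ∈ ball (0 : ℂ) r :=
    lt_of_le_of_ne (mem_closedBall.1 hz₁) (fun h => hz₁s (mem_sphere.2 h))
  refine ⟨r, by simp [abs_of_pos hr0], fun z hz => ?_⟩
  set M := gauge D (G z₁)
  rcases (gauge_nonneg (G z₁)).eq_or_lt with hM | hM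
  · exact (hmax hz).trans (hM.symm.trans_le (gauge_nonneg _))
  -- `G / M` maps `ball 0 r` into `closure D` and touches `frontier D` at `z₁`
  have hMC : (M : ℂ)⁻¹ ≠ 0 := inv_ne_zero (Complex.ofReal_ne_zero.2 hM.ne')
  have hgauge : ∀ z, gauge D ((M : ℂ)⁻¹ • G z) = M⁻¹ * gauge D (G z) := fun z => by
    rw [gauge_smul hbal, norm_inv, Complex.norm_real, Real.norm_of_nonneg hM.le]
  have hconst := eqOn_of_mem_frontier hext isOpen_ball (convex_ball 0 1).isPreconnected
    (hG.const_smul (M : ℂ)⁻¹) (hK hz₁)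
    (Filter.mem_of_superset (isOpen_ball.mem_nhds hz₁b) fun z hz =>
      hbal.mem_closure_of_gauge_le_one hDo h0 (by
        rw [Pi.smul_apply, hgauge, inv_mul_le_one₀ hM]; exact hmax (ball_subset_closedBall hz)))
    (hbal.mem_frontier_of_gauge_eq_one hDo h0 (by
      rw [Pi.smul_apply, hgauge, inv_mul_cancel₀ hM.ne']))
  have hr : G r = G z₁ := (smul_right_inj hMC).1 (hconst (hK (by simp [abs_of_pos hr0])))
  rw [hr]
  exact hmax hz

theorem gauge_dslope_le_one (hbal : Balanced ℂ D) (hDo : IsOpen D)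
    (h0 : (0 : E) ∈ D) (hext : ∀ a ∈ frontier D, IsHolomorphicallyExtreme D a)
    {F : ℂ → E} (hF : DifferentiableOn ℂ F (ball 0 1)) (hFD : MapsTo F (ball 0 1) D)
    (hF0 : F 0 = 0) {z : ℂ} (hz : z ∈ ball 0 1) : gauge D (dslope F 0 z) ≤ 1 := by
  have hG : DifferentiableOn ℂ (dslope F 0) (ball 0 1) :=
    (Complex.differentiableOn_dslope (ball_mem_nhds 0 one_pos)).2 hF
  have hbound : ∀ r ∈ Ioo ‖z‖ 1, gauge D (dslope F 0 z) ≤ r⁻¹ := by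
    rintro r ⟨hzr, hr1⟩
    have hr0 : 0 < r := (norm_nonneg z).trans_lt hzr
    obtain ⟨w, hw, hmax⟩ := exists_mem_sphere_forall_gauge_le hbal hDo h0 hext hG hr0 hr1
    rw [mem_sphere_zero_iff_norm] at hw
    have hw0 : w ≠ 0 := norm_pos_iff.1 (hw ▸ hr0)
    have hFw : F w = w • dslope F 0 w := by
      rw [dslope_of_ne F hw0, slope_def_module, hF0, sub_zero, sub_zero, smul_inv_smul₀ hw0]
    have hlt : r * gauge D (dslope F 0 w) < 1 := by
      rw [← hw, ← gauge_smul hbal, ← hFw, hbal.gauge_lt_one_iff hDo h0]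
      exact hFD (mem_ball_zero_iff.2 (hw ▸ hr1))
    calc gauge D (dslope F 0 z) ≤ gauge D (dslope F 0 w) := hmax z (by simpa using hzr.le)
      _ ≤ r⁻¹ := by rw [← mul_one r⁻¹, le_inv_mul_iff₀ hr0]; exact hlt.le
  have hinv : Tendsto (fun r : ℝ => r⁻¹) (𝓝[<] 1) (𝓝 1) := by
    simpa using (tendsto_inv₀ (one_ne_zero (α := ℝ))).mono_left nhdsWithin_le_nhds
  exact ge_of_tendsto hinv (by
    filter_upwards [Ioo_mem_nhdsLT (mem_ball_zero_iff.1 hz)] with r hr using hbound r hr)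

theorem dslope_eq_of_dslope_eq_of_gauge_eq_one (hbal : Balanced ℂ D) (hDo : IsOpen D)
    (h0 : (0 : E) ∈ D) (hext : ∀ a ∈ frontier D, IsHolomorphicallyExtreme D a)
    {F : ℂ → E} (hF : DifferentiableOn ℂ F (ball 0 1)) (hFD : MapsTo F (ball 0 1) D)
    (hF0 : F 0 = 0) {c : E} (hc : gauge D c = 1) {z₁ z : ℂ} (hz₁ : z₁ ∈ ball (0 : ℂ) 1)
    (hz : z ∈ ball (0 : ℂ) 1) (hFz₁ : dslope F 0 z₁ = c) : dslope F 0 z = c := by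
  have hG : DifferentiableOn ℂ (dslope F 0) (ball 0 1) :=
    (Complex.differentiableOn_dslope (ball_mem_nhds 0 one_pos)).2 hF
  have hGcl : MapsTo (dslope F 0) (ball 0 1) (closure D) := fun z hz =>
    hbal.mem_closure_of_gauge_le_one hDo h0 (gauge_dslope_le_one hbal hDo h0 hext hF hFD hF0 hz)
  rw [← hFz₁]
  exact eqOn_of_mem_frontier hext isOpen_ball (convex_ball 0 1).isPreconnected hG hz₁
    (Filter.mem_of_superset (isOpen_ball.mem_nhds hz₁) hGcl)
    (hFz₁ ▸ hbal.mem_frontier_of_gauge_eq_one hDo h0 hc) hz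

theorem apply_eq_self_iff_fderiv_apply_eq_self (hbal : Balanced ℂ D) (hDo : IsOpen D)
    (hDb : Bornology.IsBounded D) (hext : ∀ a ∈ frontier D, IsHolomorphicallyExtreme D a)
    {ρ : E → E} (hρ : DifferentiableOn ℂ ρ D) (hρD : MapsTo ρ D D) (hρ0 : ρ 0 = 0)
    {v : E} (hv : v ∈ D) : ρ v = v ↔ fderiv ℂ ρ 0 v = v := by
  have h0 : (0 : E) ∈ D := hbal.zero_mem ⟨v, hv⟩
  rcases eq_or_ne v 0 with rfl | hv0
  · simp [hρ0]
  set m := gauge D v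
  have hm0 : 0 < m := (gauge_pos (absorbent_nhds_zero (hDo.mem_nhds h0))
    ((NormedSpace.isVonNBounded_iff ℝ).2 hDb)).2 hv0
  have hmC : (m : ℂ) ≠ 0 := Complex.ofReal_ne_zero.2 hm0.ne'
  have hm_mem : (m : ℂ) ∈ ball (0 : ℂ) 1 := by
    simpa [abs_of_pos hm0] using (hbal.gauge_lt_one_iff hDo h0).2 hv
  set c := (m : ℂ)⁻¹ • v
  have hc : gauge D c = 1 := by
    rw [gauge_smul hbal, norm_inv, Complex.norm_real, Real.norm_of_nonneg hm0.le,
      inv_mul_cancel₀ hm0.ne']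
  have hline : MapsTo (fun z : ℂ => z • c) (ball 0 1) D := fun z hz => by
    rw [← hbal.gauge_lt_one_iff hDo h0, gauge_smul hbal, hc, mul_one]
    exact mem_ball_zero_iff.1 hz
  set F := fun z : ℂ => ρ (z • c)
  have hF : DifferentiableOn ℂ F (ball 0 1) := hρ.comp (by fun_prop) hline
  have hF0 : F 0 = 0 := by simp [F, hρ0]
  set G := dslope F 0
  have hrigid {z₁ z : ℂ} (hz₁ : z₁ ∈ ball (0 : ℂ) 1) (hz : z ∈ ball (0 : ℂ) 1) :
      G z₁ = c → G z = c :=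
    dslope_eq_of_dslope_eq_of_gauge_eq_one hbal hDo h0 hext hF (hρD.comp hline) hF0 hc hz₁ hz
  have hG0 : G 0 = (m : ℂ)⁻¹ • fderiv ℂ ρ 0 v := by
    rw [← map_smul]
    exact dslope_comp_smul_zero (hρ.differentiableAt (hDo.mem_nhds h0)) c
  have hGm : G m = (m : ℂ)⁻¹ • ρ v := by
    rw [show G m = slope F 0 m from dslope_of_ne F hmC, slope_def_module, hF0,
      sub_zero, sub_zero]
    simp only [F, c, smul_smul, mul_inv_cancel₀ hmC, one_smul]
  calc ρ v = v ↔ G m = c := by rw [hGm, smul_right_inj (inv_ne_zero hmC)]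
    _ ↔ G 0 = c := ⟨hrigid hm_mem (mem_ball_self one_pos), hrigid (mem_ball_self one_pos) hm_mem⟩
    _ ↔ fderiv ℂ ρ 0 v = v := by rw [hG0, smul_right_inj (inv_ne_zero hmC)]

end HolomorphicDiscs

theorem stmt_18_general {n : ℕ} (D : Set (Fin n → ℂ)) (hDo : IsOpen D)
    (hDb : Bornology.IsBounded D)
    (hbal : ∀ z ∈ D, ∀ l : ℂ, ‖l‖ ≤ 1 → l • z ∈ D)
    (hext : ∀ a ∈ frontier D, ∀ φ : ℂ → (Fin n → ℂ),
      DifferentiableOn ℂ φ (Metric.ball 0 1) →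
      Set.MapsTo φ (Metric.ball 0 1) (closure D) → φ 0 = a →
      ∀ x ∈ Metric.ball (0 : ℂ) 1, φ x = a)
    (ρ : (Fin n → ℂ) → (Fin n → ℂ)) (hρ : DifferentiableOn ℂ ρ D)
    (hρD : Set.MapsTo ρ D D) (hretr : ∀ z ∈ D, ρ (ρ z) = ρ z) (hρ0 : ρ 0 = 0) :
    ρ '' D = D ∩ {v : Fin n → ℂ | fderiv ℂ ρ 0 v = v} := by
  have hbal' : Balanced ℂ D := balanced_iff_smul_mem.2 fun l hl z hz => hbal z hz l hl
  have hfix : ∀ v ∈ D, ρ v = v ↔ fderiv ℂ ρ 0 v = v := fun v hv =>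
    apply_eq_self_iff_fderiv_apply_eq_self hbal' hDo hDb hext hρ hρD hρ0 hv
  ext v
  constructor
  · rintro ⟨z, hz, rfl⟩
    exact ⟨hρD hz, (hfix _ (hρD hz)).1 (hretr z hz)⟩
  · rintro ⟨hv, hv'⟩
    exact ⟨v, hv, (hfix v hv).2 hv'⟩

/-- For a bounded balanced pseudoconvex domain `D ⊆ ℂⁿ` all of whose
boundary points are holomorphically extreme, and a holomorphic retraction `ρ : D → D`
with `ρ(0) = 0`, the image of `ρ` equals `D ∩ V` where `V = {v : ρ'(0)v = v}` is a
complex-linear subspace. -/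
theorem stmt_18 {n : ℕ} (D : Set (Fin n → ℂ)) (hDo : IsOpen D) (hDc : IsConnected D)
    (hDb : Bornology.IsBounded D)
    (hbal : ∀ z ∈ D, ∀ l : ℂ, ‖l‖ ≤ 1 → l • z ∈ D)
    (hpsc : Pseudoconvex D)
    (hext : ∀ a ∈ frontier D, ∀ φ : ℂ → (Fin n → ℂ),
      DifferentiableOn ℂ φ (Metric.ball 0 1) →
      Set.MapsTo φ (Metric.ball 0 1) (closure D) → φ 0 = a →
      ∀ x ∈ Metric.ball (0 : ℂ) 1, φ x = a)
    (ρ : (Fin n → ℂ) → (Fin n → ℂ)) (hρ : DifferentiableOn ℂ ρ D)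
    (hρD : Set.MapsTo ρ D D) (hretr : ∀ z ∈ D, ρ (ρ z) = ρ z) (hρ0 : ρ 0 = 0) :
    ρ '' D = D ∩ {v : Fin n → ℂ | fderiv ℂ ρ 0 v = v} :=
  stmt_18_general D hDo hDb hbal hext ρ hρ hρD hretr hρ0
end
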